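/- The relation ∼ on the set of triples (c, κ, a) with c ∈ C³(G, U(1)⊕U(1)), κ ∈ C²(G, ℤ₂⊕ℤ₂), a ∈ Hom(G, ℤ₂) satisfying d_a²κ = 0 and d_a³c(g,h,k,f) = (−1)^{κ(g,h)·κ^{a(gh)}(k,f)}, defined by (c⁽¹⁾,κ⁽¹⁾,a⁽¹⁾) ∼ (c⁽²⁾,κ⁽²⁾,a⁽²⁾) iff a⁽¹⁾=a⁽²⁾=:a and there exist m ∈ C¹(G,ℤ₂⊕ℤ₂), σ ∈ C²(G,U(1)⊕U(1)) with κ⁽²⁾ = d_a¹m + κ⁽¹⁾ and c⁽²⁾(g,h,k) = (−1)^{κ⁽¹⁾(g,h)·m^{a(gh)}(k)}·(−1)^{m(g)·(κ⁽²⁾)^{a(g)}(h,k)}·(d_a²σ)(g,h,k)·c⁽¹⁾(g,h,k), is an equivalence relation. -/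

import Mathlib

/-- The swap action of `ZMod 2` on `A ⊕ A`. -/
def swapP {A : Type*} (t : ZMod 2) (x : A × A) : A × A :=
  if t = 0 then x else (x.2, x.1)

/-- `-1` as an element of the circle group `U(1)`. -/
noncomputable def neg1 : Circle :=
  ⟨-1, by rw [Submonoid.unitSphere]; simp [mem_sphere_zero_iff_norm]⟩

/-- `(-1)^t ∈ U(1)` for `t ∈ ℤ₂`. -/
noncomputable def sgn (t : ZMod 2) : Circle := neg1 ^ t.val

/-- Componentwise `(-1)^x ∈ U(1) ⊕ U(1)` for `x ∈ ℤ₂ ⊕ ℤ₂`. -/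
noncomputable def sgn2 (x : ZMod 2 × ZMod 2) : Circle × Circle := (sgn x.1, sgn x.2)

/-- Twisted degree-1 differential on `ℤ₂ ⊕ ℤ₂`-valued 1-cochains. -/
def ad1 {G : Type*} [Group G] (a : G → ZMod 2) (m : G → ZMod 2 × ZMod 2) :
    G → G → ZMod 2 × ZMod 2 :=
  fun g h => swapP (a g) (m h) + m g - m (g * h)

/-- Twisted degree-2 differential on `ℤ₂ ⊕ ℤ₂`-valued 2-cochains. -/
def ad2 {G : Type*} [Group G] (a : G → ZMod 2) (y : G → G → ZMod 2 × ZMod 2) :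
    G → G → G → ZMod 2 × ZMod 2 :=
  fun g h k => swapP (a g) (y h k) + y g (h * k) - y (g * h) k - y g h

/-- Twisted degree-2 differential on `U(1) ⊕ U(1)`-valued 2-cochains. -/
def d2 {G A : Type*} [Group G] [CommGroup A] (a : G → ZMod 2)
    (y : G → G → A × A) : G → G → G → A × A :=
  fun g h k => swapP (a g) (y h k) * y g (h * k) * (y (g * h) k)⁻¹ * (y g h)⁻¹

/-- Twisted degree-3 differential on `U(1) ⊕ U(1)`-valued 3-cochains. -/
def d3 {G A : Type*} [Group G] [CommGroup A] (a : G → ZMod 2)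
    (z : G → G → G → A × A) : G → G → G → G → A × A :=
  fun g h k f =>
    swapP (a g) (z h k f) * z g (h * k) f * z g h k * (z (g * h) k f)⁻¹ * (z g h (k * f))⁻¹

/-- The cocycle-type conditions defining `\widetilde{PD}_0(G)`:
`d_a² κ = 0` and `d_a³ c(g,h,k,f) = (-1)^{κ(g,h)·κ^{a(gh)}(k,f)}`. -/
def PDCond {G : Type*} [Group G] (a : G → ZMod 2)
    (c : G → G → G → Circle × Circle) (κ : G → G → ZMod 2 × ZMod 2) : Prop :=
  (∀ g h k : G, ad2 a κ g h k = 0) ∧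
  (∀ g h k f : G, d3 a c g h k f = sgn2 (κ g h * swapP (a (g * h)) (κ k f)))

/-- A triple `(c, κ, a)` as in the definition of `\widetilde{PD}_0(G)`. -/
def Triple (G : Type*) [Group G] :=
  (G → G → G → Circle × Circle) × (G → G → ZMod 2 × ZMod 2) × (G → ZMod 2)

/-- The relation `∼_{PD_0(G)}` on triples `(c, κ, a)`. -/
def PDRel {G : Type*} [Group G] (p q : Triple G) : Prop :=
  p.2.2 = q.2.2 ∧
  ∃ (m : G → ZMod 2 × ZMod 2) (σ : G → G → Circle × Circle),
    (∀ g h : G, q.2.1 g h = ad1 p.2.2 m g h + p.2.1 g h) ∧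
    (∀ g h k : G,
      q.1 g h k =
        sgn2 (p.2.1 g h * swapP (p.2.2 (g * h)) (m k)) *
          sgn2 (m g * swapP (p.2.2 g) (q.2.1 h k)) *
          d2 p.2.2 σ g h k * p.1 g h k)

/-!
Transforming a triple `(c, κ, a)` by `(m, σ)` means replacing `κ` by `d¹m + κ` and `c` by
`(-1)^{κ ∪ m + m ∪ (d¹m + κ)} · d²σ · c`, and the relation says exactly that the second triple is
a transform of the first. Since `a` is a homomorphism, the cup product twisted by `a` obeys the
Leibniz rule `d(m ∪ n) = dm ∪ n - m ∪ dn`, and this shows that transforming by `(m, σ)` and then by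
`(n, τ)` is transforming by `(m + n, σ · τ · (-1)^{m ∪ n})`. As `(0, 1)` acts trivially, the
relation is reflexive and transitive, and `(-m, σ⁻¹ · (-1)^{-(m ∪ -m)})` undoes `(m, σ)`.
-/

lemma zmod_two_eq_zero_or_one : ∀ t : ZMod 2, t = 0 ∨ t = 1 := by
  decide

section Swap

variable {A : Type*}

lemma swapP_add [Add A] (t : ZMod 2) (x y : A × A) :
    swapP t (x + y) = swapP t x + swapP t y := by
  rcases zmod_two_eq_zero_or_one t with rfl | rfl <;> simp [swapP]

lemma swapP_sub [Sub A] (t : ZMod 2) (x y : A × A) :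
    swapP t (x - y) = swapP t x - swapP t y := by
  rcases zmod_two_eq_zero_or_one t with rfl | rfl <;> simp [swapP]

lemma swapP_mul [Mul A] (t : ZMod 2) (x y : A × A) :
    swapP t (x * y) = swapP t x * swapP t y := by
  rcases zmod_two_eq_zero_or_one t with rfl | rfl <;> simp [swapP]

lemma swapP_zero [Zero A] (t : ZMod 2) : swapP t (0 : A × A) = 0 := by
  rcases zmod_two_eq_zero_or_one t with rfl | rfl <;> simp [swapP]

lemma swapP_one [One A] (t : ZMod 2) : swapP t (1 : A × A) = 1 := by
  rcases zmod_two_eq_zero_or_one t with rfl | rfl <;> simp [swapP]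

lemma swapP_swapP (s t : ZMod 2) (x : A × A) : swapP s (swapP t x) = swapP (s + t) x := by
  rcases zmod_two_eq_zero_or_one s with rfl | rfl <;>
    rcases zmod_two_eq_zero_or_one t with rfl | rfl <;>
    simp [swapP, show (1 + 1 : ZMod 2) = 0 from rfl]

end Swap

lemma neg1_mul_self : neg1 * neg1 = 1 := Subtype.ext (by show (-1 : ℂ) * -1 = 1; norm_num)

lemma sgn_add (t u : ZMod 2) : sgn (t + u) = sgn t * sgn u := by
  rw [sgn, sgn, sgn, ZMod.val_add, ← pow_eq_pow_mod _ (by rw [sq, neg1_mul_self]), pow_add]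

lemma sgn2_add (x y : ZMod 2 × ZMod 2) : sgn2 (x + y) = sgn2 x * sgn2 y := by
  simp [sgn2, sgn_add]

lemma sgn2_sub (x y : ZMod 2 × ZMod 2) : sgn2 (x - y) = sgn2 x * (sgn2 y)⁻¹ :=
  eq_mul_inv_of_mul_eq (by rw [← sgn2_add, sub_add_cancel])

lemma sgn2_zero : sgn2 0 = 1 := by
  simp [sgn2, sgn]

lemma sgn2_swapP (t : ZMod 2) (x : ZMod 2 × ZMod 2) : sgn2 (swapP t x) = swapP t (sgn2 x) := by
  rcases zmod_two_eq_zero_or_one t with rfl | rfl <;> simp [swapP, sgn2]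

section Cochains

variable {G : Type*} (a : G → ZMod 2)

/- Cup products of cochains with coefficients twisted by `a`; the digits are the degrees of the
factors. -/

def cup11 (m n : G → ZMod 2 × ZMod 2) : G → G → ZMod 2 × ZMod 2 :=
  fun g h => m g * swapP (a g) (n h)

def cup12 (m : G → ZMod 2 × ZMod 2) (κ : G → G → ZMod 2 × ZMod 2) :
    G → G → G → ZMod 2 × ZMod 2 :=
  fun g h k => m g * swapP (a g) (κ h k)

lemma cup12_add_left (m n : G → ZMod 2 × ZMod 2) (κ : G → G → ZMod 2 × ZMod 2) :
    cup12 a (m + n) κ = cup12 a m κ + cup12 a n κ := by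
  ext1 g; ext1 h; ext1 k; simp only [cup12, Pi.add_apply, add_mul]

lemma cup12_add_right (m : G → ZMod 2 × ZMod 2) (κ κ' : G → G → ZMod 2 × ZMod 2) :
    cup12 a m (κ + κ') = cup12 a m κ + cup12 a m κ' := by
  ext1 g; ext1 h; ext1 k; simp only [cup12, Pi.add_apply, swapP_add, mul_add]

lemma cup12_zero_left (κ : G → G → ZMod 2 × ZMod 2) : cup12 a 0 κ = 0 := by
  ext1 g; ext1 h; ext1 k; simp [cup12]

variable [Group G]

def cup21 (κ : G → G → ZMod 2 × ZMod 2) (m : G → ZMod 2 × ZMod 2) :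
    G → G → G → ZMod 2 × ZMod 2 :=
  fun g h k => κ g h * swapP (a (g * h)) (m k)

lemma ad1_add (m n : G → ZMod 2 × ZMod 2) : ad1 a (m + n) = ad1 a m + ad1 a n := by
  ext1 g; ext1 h; simp only [ad1, Pi.add_apply, swapP_add]; abel

lemma ad1_zero : ad1 a (0 : G → ZMod 2 × ZMod 2) = 0 := by
  ext1 g; ext1 h; simp [ad1, swapP_zero]

lemma cup21_add_left (κ κ' : G → G → ZMod 2 × ZMod 2) (m : G → ZMod 2 × ZMod 2) :
    cup21 a (κ + κ') m = cup21 a κ m + cup21 a κ' m := by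
  ext1 g; ext1 h; ext1 k; simp only [cup21, Pi.add_apply, add_mul]

lemma cup21_add_right (κ : G → G → ZMod 2 × ZMod 2) (m n : G → ZMod 2 × ZMod 2) :
    cup21 a κ (m + n) = cup21 a κ m + cup21 a κ n := by
  ext1 g; ext1 h; ext1 k; simp only [cup21, Pi.add_apply, swapP_add, mul_add]

lemma cup21_zero_right (κ : G → G → ZMod 2 × ZMod 2) : cup21 a κ 0 = 0 := by
  ext1 g; ext1 h; ext1 k; simp [cup21, swapP_zero]

variable {a}

lemma cup21_ad1 (ha : ∀ g h, a (g * h) = a g + a h) (m n : G → ZMod 2 × ZMod 2) :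
    cup21 a (ad1 a m) n = ad2 a (cup11 a m n) + cup12 a m (ad1 a n) := by
  ext1 g; ext1 h; ext1 k
  simp only [ad2, ad1, cup11, cup21, cup12, Pi.add_apply, swapP_mul, swapP_add, swapP_sub,
    swapP_swapP, ha]
  ring

end Cochains

section Gauge

variable {G : Type*} [Group G]

def twist (a : G → ZMod 2) (κ : G → G → ZMod 2 × ZMod 2) (m : G → ZMod 2 × ZMod 2) :
    G → G → G → ZMod 2 × ZMod 2 :=
  cup21 a κ m + cup12 a m (ad1 a m + κ)

lemma twist_add_twist {a : G → ZMod 2} (ha : ∀ g h, a (g * h) = a g + a h)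
    (κ : G → G → ZMod 2 × ZMod 2) (m n : G → ZMod 2 × ZMod 2) :
    twist a (ad1 a m + κ) n + twist a κ m = twist a κ (m + n) + ad2 a (cup11 a m n) := by
  simp only [twist, ad1_add, cup21_add_left, cup21_add_right, cup12_add_left, cup12_add_right,
    cup21_ad1 ha]
  abel

lemma twist_zero (a : G → ZMod 2) (κ : G → G → ZMod 2 × ZMod 2) : twist a κ 0 = 0 := by
  simp only [twist, cup21_zero_right, cup12_zero_left, add_zero]

section CommGroup

variable {B : Type*} [CommGroup B] (a : G → ZMod 2)

lemma d2_mul (σ τ : G → G → B × B) : d2 a (σ * τ) = d2 a σ * d2 a τ := by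
  ext1 g; ext1 h; ext1 k
  simp only [d2, Pi.mul_apply, swapP_mul, mul_inv]
  ac_rfl

lemma d2_one : d2 a (1 : G → G → B × B) = 1 := by
  ext1 g; ext1 h; ext1 k; simp [d2, swapP_one]

end CommGroup

lemma d2_sgn2 (a : G → ZMod 2) (y : G → G → ZMod 2 × ZMod 2) :
    d2 a (fun g h => sgn2 (y g h)) = fun g h k => sgn2 (ad2 a y g h k) := by
  ext1 g; ext1 h; ext1 k; simp only [d2, ad2, sgn2_sub, sgn2_add, sgn2_swapP]

noncomputable def gaugeTransform (m : G → ZMod 2 × ZMod 2) (σ : G → G → Circle × Circle)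
    (p : Triple G) : Triple G :=
  (fun g h k => sgn2 (twist p.2.2 p.2.1 m g h k) * d2 p.2.2 σ g h k * p.1 g h k,
    ad1 p.2.2 m + p.2.1, p.2.2)

lemma pdRel_iff_exists_gaugeTransform {p q : Triple G} :
    PDRel p q ↔ ∃ m σ, q = gaugeTransform m σ p := by
  constructor
  · rintro ⟨ha, m, σ, hκ, hc⟩
    have hκ' : q.2.1 = ad1 p.2.2 m + p.2.1 := funext₂ hκ
    refine ⟨m, σ, Prod.ext (funext₃ fun g h k => ?_) (Prod.ext hκ' ha.symm)⟩
    rw [hc, gaugeTransform, twist, ← hκ']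
    simp only [Pi.add_apply, sgn2_add, cup21, cup12]
  · rintro ⟨m, σ, rfl⟩
    refine ⟨rfl, m, σ, fun g h => rfl, fun g h k => ?_⟩
    simp only [gaugeTransform, twist, Pi.add_apply, sgn2_add, cup21, cup12]

lemma gaugeTransform_zero_one (p : Triple G) : gaugeTransform 0 1 p = p := by
  refine Prod.ext (funext₃ fun g h k => ?_) (Prod.ext ?_ rfl)
  · simp [gaugeTransform, twist_zero, d2_one, sgn2_zero]
  · simp [gaugeTransform, ad1_zero]

lemma gaugeTransform_gaugeTransform {p : Triple G}
    (ha : ∀ g h, p.2.2 (g * h) = p.2.2 g + p.2.2 h) (m n : G → ZMod 2 × ZMod 2)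
    (σ τ : G → G → Circle × Circle) :
    gaugeTransform n τ (gaugeTransform m σ p) =
      gaugeTransform (m + n) (σ * τ * fun g h => sgn2 (cup11 p.2.2 m n g h)) p := by
  refine Prod.ext (funext₃ fun g h k => ?_) (Prod.ext ?_ rfl)
  · have hsgn : sgn2 (twist p.2.2 (ad1 p.2.2 m + p.2.1) n g h k) * sgn2 (twist p.2.2 p.2.1 m g h k)
        = sgn2 (twist p.2.2 p.2.1 (m + n) g h k) * sgn2 (ad2 p.2.2 (cup11 p.2.2 m n) g h k) := by
      rw [← sgn2_add, ← sgn2_add]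
      exact congrArg sgn2 (congrFun₃ (twist_add_twist ha p.2.1 m n) g h k)
    simp only [gaugeTransform, d2_mul, d2_sgn2, Pi.mul_apply]
    calc _ = sgn2 (twist p.2.2 (ad1 p.2.2 m + p.2.1) n g h k) * sgn2 (twist p.2.2 p.2.1 m g h k)
            * (d2 p.2.2 σ g h k * d2 p.2.2 τ g h k * p.1 g h k) := by ac_rfl
      _ = _ := by rw [hsgn]; ac_rfl
  · simp only [gaugeTransform, ad1_add]; abel

end Gauge

theorem stmt2_general {G : Type*} [Group G] :
    Equivalence (fun p q :
        {t : Triple G //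
          (∀ g h, t.2.2 (g * h) = t.2.2 g + t.2.2 h) ∧ PDCond t.2.2 t.1 t.2.1} =>
      PDRel p.val q.val) := by
  simp only [pdRel_iff_exists_gaugeTransform]
  refine ⟨fun p => ⟨0, 1, (gaugeTransform_zero_one p.val).symm⟩, fun {p q} ⟨m, σ, hq⟩ => ?_,
    fun {p q r} ⟨m, σ, hq⟩ ⟨n, τ, hr⟩ => ?_⟩
  · refine ⟨-m, σ⁻¹ * (fun g h => sgn2 (cup11 p.val.2.2 m (-m) g h))⁻¹, ?_⟩
    rw [hq, gaugeTransform_gaugeTransform p.prop.1, add_neg_cancel, mul_inv_cancel_left,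
      inv_mul_cancel, gaugeTransform_zero_one]
  · rw [hr, hq, gaugeTransform_gaugeTransform p.prop.1]
    exact ⟨_, _, rfl⟩

/-- the relation `∼_{PD_0(G)}` on triples `(c, κ, a)` satisfying the
cocycle conditions (with `a` a homomorphism) is an equivalence relation. -/
theorem stmt2 {G : Type*} [Group G] [Fintype G] :
    Equivalence (fun p q :
        {t : Triple G //
          (∀ g h, t.2.2 (g * h) = t.2.2 g + t.2.2 h) ∧ PDCond t.2.2 t.1 t.2.1} =>
      PDRel p.val q.val) :=
  stmt2_general
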